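/- In the canonical Poisson bracket on ℝ^{2N} ({q_i,p_j} = δ_{ij}), the functions F^{(h,a)}_{ij} = p_i p_j + ((2a-1)/2)hω²(q_i p_j + q_j p_i) + ω² q_i q_j satisfy {F^{(h,a)}_{ij}, F^{(h,a)}_{kl}} = κ·(L_{jl}δ_{ik} + L_{jk}δ_{il} + L_{il}δ_{jk} + L_{ik}δ_{jl}), where L_{ij} = q_i p_j - q_j p_i and κ = ω²(1 - h²ω²(a - 1/2)²). -/

import Mathlib

/-- The canonical Poisson bracket `{f,g} = ∑ s (∂f/∂q_s ∂g/∂p_s - ∂g/∂q_s ∂f/∂p_s)`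
of two functions of `(q, p) ∈ ℝᴺ × ℝᴺ`, evaluated at the point `(q, p)`. -/
noncomputable def poissonBracket {N : ℕ} (f g : (Fin N → ℝ) → (Fin N → ℝ) → ℝ)
    (q p : Fin N → ℝ) : ℝ :=
  ∑ s : Fin N,
    (deriv (fun t => f (Function.update q s t) p) (q s) *
        deriv (fun t => g q (Function.update p s t)) (p s)
      - deriv (fun t => g (Function.update q s t) p) (q s) *
        deriv (fun t => f q (Function.update p s t)) (p s))

/-- Angular momentum `L_{ij} = q_i p_j - q_j p_i`. -/
def angMom {N : ℕ} (i j : Fin N) : (Fin N → ℝ) → (Fin N → ℝ) → ℝ :=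
  fun q p => q i * p j - q j * p i

/-- The discrete Demkov–Fradkin tensor component `F^{(h,a)}_{ij}`. -/
noncomputable def discreteDF {N : ℕ} (h ω a : ℝ) (i j : Fin N) : (Fin N → ℝ) → (Fin N → ℝ) → ℝ :=
  fun q p => p i * p j + (2 * a - 1) / 2 * h * ω ^ 2 * (q i * p j + q j * p i)
    + ω ^ 2 * q i * q j

/-!
Write `F_ij = p_i p_j + c (q_i p_j + q_j p_i) + d q_i q_j`. Its `q`- and `p`-gradients are
supported on the coordinates `i` and `j`, so in `{F_ij, F_kl} = ∇_q F_ij · ∇_p F_kl - ∇_p F_ij · ∇_q F_kl`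
only the four Kronecker deltas `δ_ik, δ_il, δ_jk, δ_jl` survive. The coefficient of `δ_ik` is
`(c p_j + d q_j)(p_l + c q_l) - (p_j + c q_j)(c p_l + d q_l) = (d - c²) L_jl`, and similarly for the
others. For `F^{(h,a)}` one has `c = (a - 1/2) h ω²` and `d = ω²`, so `d - c² = κ`.
-/

open Function Matrix

theorem hasDerivAt_update_apply {𝕜 ι : Type*} [NontriviallyNormedField 𝕜] [Fintype ι]
    [DecidableEq ι] (x : ι → 𝕜) (s j : ι) :
    HasDerivAt (fun t => update x s t j) ((Pi.single j 1 : ι → 𝕜) s) (x s) := by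
  rw [Pi.single_comm]
  exact hasDerivAt_pi.1 (hasDerivAt_update x s (x s)) j

variable {N : ℕ}

noncomputable def gradQ (f : (Fin N → ℝ) → (Fin N → ℝ) → ℝ) (q p : Fin N → ℝ) : Fin N → ℝ :=
  fun s => deriv (fun t => f (update q s t) p) (q s)

noncomputable def gradP (f : (Fin N → ℝ) → (Fin N → ℝ) → ℝ) (q p : Fin N → ℝ) : Fin N → ℝ :=
  fun s => deriv (fun t => f q (update p s t)) (p s)

theorem poissonBracket_eq_dotProduct (f g : (Fin N → ℝ) → (Fin N → ℝ) → ℝ) (q p : Fin N → ℝ) :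
    poissonBracket f g q p = gradQ f q p ⬝ᵥ gradP g q p - gradP f q p ⬝ᵥ gradQ g q p := by
  simp only [poissonBracket, dotProduct, gradQ, gradP, Finset.sum_sub_distrib, mul_comm]

def quadTensor (c d : ℝ) (i j : Fin N) (q p : Fin N → ℝ) : ℝ :=
  p i * p j + c * (q i * p j + q j * p i) + d * q i * q j

theorem gradQ_quadTensor (c d : ℝ) (i j : Fin N) (q p : Fin N → ℝ) :
    gradQ (quadTensor c d i j) q p =
      (c * p j + d * q j) • Pi.single i 1 + (c * p i + d * q i) • Pi.single j 1 := by
  funext s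
  have hq := hasDerivAt_update_apply q s
  have H := (((((hq i).mul_const (p j)).add ((hq j).mul_const (p i))).const_mul c).const_add
    (p i * p j)).add (((hq i).const_mul d).mul (hq j))
  simp only [update_eq_self] at H
  refine (H.congr_deriv ?_).deriv
  simp only [Pi.add_apply, Pi.smul_apply, smul_eq_mul, Pi.single_apply]
  split_ifs <;> ring

theorem gradP_quadTensor (c d : ℝ) (i j : Fin N) (q p : Fin N → ℝ) :
    gradP (quadTensor c d i j) q p =
      (p j + c * q j) • Pi.single i 1 + (p i + c * q i) • Pi.single j 1 := by
  funext s
  have hp := hasDerivAt_update_apply p s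
  have H := (((hp i).mul (hp j)).add ((((hp j).const_mul (q i)).add
    ((hp i).const_mul (q j))).const_mul c)).add_const (d * q i * q j)
  simp only [update_eq_self] at H
  refine (H.congr_deriv ?_).deriv
  simp only [Pi.add_apply, Pi.smul_apply, smul_eq_mul, Pi.single_apply]
  split_ifs <;> ring

theorem poissonBracket_quadTensor (c d : ℝ) (i j k l : Fin N) (q p : Fin N → ℝ) :
    poissonBracket (quadTensor c d i j) (quadTensor c d k l) q p =
      (d - c ^ 2) *
        (angMom j l q p * (if i = k then 1 else 0)
          + angMom j k q p * (if i = l then 1 else 0)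
          + angMom i l q p * (if j = k then 1 else 0)
          + angMom i k q p * (if j = l then 1 else 0)) := by
  rw [poissonBracket_eq_dotProduct, gradQ_quadTensor, gradP_quadTensor, gradP_quadTensor,
    gradQ_quadTensor]
  simp only [add_dotProduct, dotProduct_add, smul_dotProduct, dotProduct_smul, single_dotProduct,
    one_mul, smul_eq_mul, Pi.single_apply, angMom]
  ring

theorem poisson_discreteDF_discreteDF {N : ℕ} (h ω a : ℝ) (i j k l : Fin N)
    (q p : Fin N → ℝ) :
    poissonBracket (discreteDF h ω a i j) (discreteDF h ω a k l) q p =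
      ω ^ 2 * (1 - h ^ 2 * ω ^ 2 * (a - 1 / 2) ^ 2) *
        (angMom j l q p * (if i = k then 1 else 0)
          + angMom j k q p * (if i = l then 1 else 0)
          + angMom i l q p * (if j = k then 1 else 0)
          + angMom i k q p * (if j = l then 1 else 0)) := by
  have hF : ∀ m n : Fin N,
      discreteDF h ω a m n = quadTensor ((2 * a - 1) / 2 * h * ω ^ 2) (ω ^ 2) m n :=
    fun _ _ => rfl
  rw [hF, hF, poissonBracket_quadTensor]
  ring
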